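/- arXiv:2310.00403 — 4 statements merged into one kernel-verified Lean document; each statement's English description precedes it below -/
import Mathlib

section
/- Let G ≅ Z_{ℓ1} × ⋯ × Z_{ℓr} (via isomorphism Φ) be a finite abelian group, I a non-periodic multiset with elements from G, and t a multiplier of I with tI = I + g. Then there exists z ∈ G with t(I+z) = I+z if and only if Φ(g)_k ∈ gcd(t−1, ℓ_k)·Z_{ℓ_k} for each 1 ≤ k ≤ r; and if such z exists, there are exactly ∏_{i=1}^r gcd(t−1, ℓ_i) such z. -/
/-- The multiplicity function of the translated multiset `I + g`:
`m_{I+g}(i) = m_I(i - g)`. -/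
def translateM {G : Type*} [AddGroup G] (m : G → ℕ) (g : G) : G → ℕ :=
  fun i => m (i - g)

/-- The multiplicity function of the dilated multiset `t·I = {(t·i)^{m(i)} : i ∈ I}`:
`m_{tI}(x) = ∑_{j : t • j = x} m_I(j)`. -/
def dilateM {G : Type*} [AddGroup G] [Fintype G] [DecidableEq G] (t : ℕ) (m : G → ℕ) :
    G → ℕ :=
  fun x => ∑ j ∈ Finset.univ.filter (fun j : G => t • j = x), m j

-- ZMod lemmas
lemma zmul_range (n : ℕ) (c : ZMod n) :
    Set.range (fun x : ZMod n => c * x) = (AddSubgroup.zmultiples c : Set (ZMod n)) := by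
  ext y
  simp only [Set.mem_range, SetLike.mem_coe, AddSubgroup.mem_zmultiples_iff]
  constructor
  · rintro ⟨x, rfl⟩
    obtain ⟨k, rfl⟩ := ZMod.intCast_surjective x
    exact ⟨k, by rw [zsmul_eq_mul]; ring⟩
  · rintro ⟨k, rfl⟩
    exact ⟨(k : ZMod n), by rw [zsmul_eq_mul]; ring⟩

lemma zmultiples_gcd (n : ℕ) (c : ℤ) :
    AddSubgroup.zmultiples ((c : ZMod n)) =
      AddSubgroup.zmultiples ((Int.gcd c n : ZMod n)) := by
  apply le_antisymm
  · apply AddSubgroup.zmultiples_le_of_mem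
    obtain ⟨k, hk⟩ := Int.gcd_dvd_left (a := c) (b := (n : ℤ))
    refine ⟨k, ?_⟩
    show k • ((Int.gcd c n : ℕ) : ZMod n) = _
    rw [zsmul_eq_mul]
    have : ((c : ℤ) : ZMod n) = ((Int.gcd c n : ℤ) : ZMod n) * ((k : ℤ) : ZMod n) := by
      rw [← Int.cast_mul, ← hk]
    push_cast at this ⊢
    rw [mul_comm] at this
    exact this.symm

  · apply AddSubgroup.zmultiples_le_of_mem
    refine ⟨Int.gcdA c n, ?_⟩
    show Int.gcdA c n • ((c : ℤ) : ZMod n) = _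
    rw [zsmul_eq_mul]
    have hb := Int.gcd_eq_gcd_ab c n
    have : ((Int.gcd c n : ℤ) : ZMod n) = ((c * Int.gcdA c n + n * Int.gcdB c n : ℤ) : ZMod n) := by
      rw [← hb]
    push_cast at this
    rw [ZMod.natCast_self] at this
    rw [this]; ring

lemma range_mulLeft (n : ℕ) (c : ℤ) :
    (AddMonoidHom.mulLeft ((c : ZMod n))).range =
      AddSubgroup.zmultiples ((Int.gcd c n : ZMod n)) := by
  rw [← zmultiples_gcd]
  apply SetLike.ext'
  rw [← zmul_range n (c : ZMod n)]
  rfl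

lemma card_ker_zmod (n : ℕ) [NeZero n] (c : ℤ) :
    Nat.card {x : ZMod n | (c : ZMod n) * x = 0} = Int.gcd c n := by
  set ψ := AddMonoidHom.mulLeft ((c : ZMod n)) with hψ
  have hker : {x : ZMod n | (c : ZMod n) * x = 0} = (ψ.ker : Set (ZMod n)) := rfl
  set d : ℕ := Int.gcd c n with hd
  have hn0 : n ≠ 0 := NeZero.ne n
  have hdn : d ∣ n := Int.ofNat_dvd.mp (Int.dvd_natAbs.mpr (Int.gcd_dvd_right c n))
  have hd0 : d ≠ 0 := by
    rw [hd]
    intro h0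
    rw [Int.gcd_eq_zero_iff] at h0
    exact hn0 (by exact_mod_cast congrArg Int.natAbs h0.2)
  -- cardinality of range
  have hrange : Nat.card ψ.range = n / d := by
    rw [range_mulLeft, Nat.card_zmultiples, ZMod.addOrderOf_coe d hn0,
      Nat.gcd_eq_right hdn]
  have hcard : Nat.card (ZMod n) = Nat.card (ZMod n ⧸ ψ.ker) * Nat.card ψ.ker :=
    AddSubgroup.card_eq_card_quotient_mul_card_addSubgroup ψ.ker
  have hq : Nat.card (ZMod n ⧸ ψ.ker) = n / d := by
    rw [← hrange]
    exact Nat.card_congr (QuotientAddGroup.quotientKerEquivRange ψ).toEquiv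
  rw [hq, Nat.card_zmod] at hcard
  have hnd0 : n / d ≠ 0 := by
    intro h0
    exact hn0 (by simpa [h0] using (Nat.div_mul_cancel hdn).symm)
  have hK : Nat.card ψ.ker = n / (n / d) := by
    have : n / (n / d) = (n / d * Nat.card ψ.ker) / (n / d) := by rw [← hcard]
    rw [this, Nat.mul_div_cancel_left _ (Nat.pos_of_ne_zero hnd0)]
  rw [hker]
  have : Nat.card (ψ.ker : Set (ZMod n)) = Nat.card ψ.ker := rfl
  rw [this, hK, Nat.div_div_self hdn hn0]

/-- For a non-periodic multiset `I` on `G ≅ ℤ_{ℓ₁} × ⋯ × ℤ_{ℓᵣ}` and a multiplier `t`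
with `tI = I + g`: a translate `I + z` fixed by `t` exists iff
`Φ(g)ₖ ∈ gcd(t−1, ℓₖ)·ℤ_{ℓₖ}` for all `k`, and in that case there are exactly
`∏ᵢ gcd(t−1, ℓᵢ)` such `z`. -/
theorem stmt6 {G : Type*} [AddCommGroup G] [Fintype G] [DecidableEq G]
    (r : ℕ) (ℓ : Fin r → ℕ) [∀ i, NeZero (ℓ i)] (Φ : G ≃+ ∀ i, ZMod (ℓ i))
    (m : G → ℕ) (hnp : ∀ g : G, translateM m g = m → g = 0)
    (t : ℕ) (ht : Nat.Coprime t (AddMonoid.exponent G)) (g : G)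
    (h : dilateM t m = translateM m g) :
    ((∃ z : G, dilateM t (translateM m z) = translateM m z) ↔
      ∀ k, Φ g k ∈ AddSubgroup.zmultiples ((Int.gcd ((t : ℤ) - 1) (ℓ k : ℤ) : ZMod (ℓ k)))) ∧
    ((∃ z : G, dilateM t (translateM m z) = translateM m z) →
      {z : G | dilateM t (translateM m z) = translateM m z}.ncard
        = ∏ i, Int.gcd ((t : ℤ) - 1) (ℓ i : ℤ)) := by
  set e := AddMonoid.exponent G with he
  set u : ℤ := Int.gcdA t e with hu
  have hbez : (1 : ℤ) = t * u + e * Int.gcdB t e := by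
    have h1 := Int.gcd_eq_gcd_ab (t : ℤ) (e : ℤ)
    rw [Int.gcd_natCast_natCast, ht] at h1
    exact_mod_cast h1
  have key : ∀ x : G, ((t : ℤ) * u) • x = x := by
    intro x
    have hex : ∀ y : G, (e : ℤ) • y = 0 := by
      intro y
      rw [natCast_zsmul, he]
      exact AddMonoid.exponent_nsmul_eq_zero y
    have : ((t : ℤ) * u) • x = (1 - (e : ℤ) * Int.gcdB t e) • x := by
      congr 1
      rw [hbez]; ring
    rw [this, sub_smul, one_smul, mul_smul, hex, sub_zero]
  have hut : ∀ x : G, u • (t • x) = x := by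
    intro x
    rw [← natCast_zsmul x t, ← mul_smul, mul_comm]
    exact key x
  have htu : ∀ x : G, t • (u • x) = x := by
    intro x
    rw [← natCast_zsmul (u • x) t, ← mul_smul]
    exact key x
  have hdil : ∀ f : G → ℕ, dilateM t f = fun x => f (u • x) := by
    intro f
    funext x
    have hfil : Finset.univ.filter (fun j : G => t • j = x) = {u • x} := by
      ext j
      simp only [Finset.mem_filter, Finset.mem_univ, true_and, Finset.mem_singleton]
      constructor
      · rintro rfl; exact (hut j).symm
      · rintro rfl; exact htu x
    rw [dilateM, hfil, Finset.sum_singleton]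
  have htr : ∀ a b : G, translateM m a = translateM m b ↔ a = b := by
    intro a b
    constructor
    · intro hab
      have hm0 : translateM m (a - b) = m := by
        funext x
        have hx := congrFun hab (x + b)
        simp only [translateM] at hx ⊢
        rw [show x - (a - b) = x + b - a by abel, hx, add_sub_cancel_right]
      have := hnp _ hm0
      rwa [sub_eq_zero] at this
    · rintro rfl; rfl
  have hm : ∀ x : G, m (u • x) = m (x - g) := by
    intro x
    have := congrFun h x
    rwa [hdil m] at this
  have keyz : ∀ z : G, (dilateM t (translateM m z) = translateM m z) ↔
      ((t : ℤ) - 1) • z = -g := by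
    intro z
    rw [hdil]
    have hL : (fun x => translateM m z (u • x)) = translateM m (g + (t : ℤ) • z) := by
      funext x
      show m (u • x - z) = m (x - (g + (t : ℤ) • z))
      have h1 : u • x - z = u • (x - (t : ℤ) • z) := by
        rw [smul_sub]
        congr 1
        rw [← mul_smul, mul_comm]
        exact (key z).symm
      rw [h1, hm]
      congr 1
      abel
    rw [hL, htr]
    have expand : ((t : ℤ) - 1) • z = (t : ℤ) • z - z := by
      rw [sub_smul, one_smul]
    rw [expand]
    constructor
    · intro H
      have H2 : (t : ℤ) • z = z - g := by
        rw [eq_sub_iff_add_eq, add_comm]; exact H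
      rw [H2]; abel
    · intro H
      rw [sub_eq_iff_eq_add] at H
      rw [H]; abel
  set c : ℤ := (t : ℤ) - 1 with hc
  have hset : {z : G | dilateM t (translateM m z) = translateM m z} = {z : G | c • z = -g} :=
    Set.ext fun z => keyz z
  have hmem : ∀ (k : Fin r) (y : ZMod (ℓ k)),
      (∃ x : ZMod (ℓ k), (c : ZMod (ℓ k)) * x = y) ↔
        y ∈ AddSubgroup.zmultiples ((Int.gcd c (ℓ k) : ZMod (ℓ k))) := by
    intro k y
    rw [← zmultiples_gcd]
    constructor
    · rintro ⟨x, rfl⟩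
      have : (c : ZMod (ℓ k)) * x ∈ Set.range (fun x : ZMod (ℓ k) => (c : ZMod (ℓ k)) * x) :=
        ⟨x, rfl⟩
      rw [zmul_range] at this
      exact this
    · intro hy
      have : y ∈ (AddSubgroup.zmultiples ((c : ZMod (ℓ k))) : Set (ZMod (ℓ k))) := hy
      rw [← zmul_range] at this
      exact this
  constructor
  · rw [exists_congr keyz]
    constructor
    · rintro ⟨z, hz⟩ k
      rw [← AddSubgroup.neg_mem_iff, ← hmem k]
      refine ⟨Φ z k, ?_⟩
      have h1 : Φ (c • z) = Φ (-g) := congrArg Φ hz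
      rw [map_zsmul, map_neg] at h1
      have h2 := congrFun h1 k
      rw [Pi.smul_apply, Pi.neg_apply, zsmul_eq_mul] at h2
      exact h2
    · intro hk
      have hx : ∀ k, ∃ x : ZMod (ℓ k), (c : ZMod (ℓ k)) * x = -(Φ g k) := by
        intro k
        rw [hmem k, AddSubgroup.neg_mem_iff]
        exact hk k
      choose x hxx using hx
      refine ⟨Φ.symm x, ?_⟩
      apply Φ.injective
      rw [map_zsmul, map_neg, Φ.apply_symm_apply]
      funext k
      rw [Pi.smul_apply, Pi.neg_apply, zsmul_eq_mul]
      exact hxx k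
  · rintro ⟨z₀, hz₀⟩
    have hz0 : c • z₀ = -g := (keyz z₀).mp hz₀
    rw [hset]
    have e1 : {z : G | c • z = -g} ≃ {x : G | c • x = 0} :=
      { toFun := fun z => ⟨z.1 - z₀, by
          have hz := z.2
          simp only [Set.mem_setOf_eq] at hz ⊢
          rw [smul_sub, hz, hz0, sub_self]⟩
        invFun := fun x => ⟨x.1 + z₀, by
          have hx := x.2
          simp only [Set.mem_setOf_eq] at hx ⊢
          rw [smul_add, hx, hz0, zero_add]⟩
        left_inv := fun z => by simp
        right_inv := fun x => by simp }
    have e2 : {x : G | c • x = 0} ≃ {w : ∀ i, ZMod (ℓ i) // ∀ k, (c : ZMod (ℓ k)) * w k = 0} :=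
      Φ.toEquiv.subtypeEquiv (fun x => by
        simp only [Set.mem_setOf_eq, AddEquiv.toEquiv_eq_coe, EquivLike.coe_coe]
        constructor
        · intro hx k
          have : Φ (c • x) = Φ 0 := congrArg Φ hx
          rw [map_zsmul, map_zero] at this
          have h2 := congrFun this k
          rw [Pi.smul_apply, Pi.zero_apply, zsmul_eq_mul] at h2
          exact h2
        · intro hx
          apply Φ.injective
          rw [map_zsmul, map_zero]
          funext k
          rw [Pi.smul_apply, Pi.zero_apply, zsmul_eq_mul]
          exact hx k)
    have e3 : {w : ∀ i, ZMod (ℓ i) // ∀ k, (c : ZMod (ℓ k)) * w k = 0} ≃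
        ∀ k, {x : ZMod (ℓ k) // (c : ZMod (ℓ k)) * x = 0} :=
      Equiv.subtypePiEquivPi (p := fun k (x : ZMod (ℓ k)) => (c : ZMod (ℓ k)) * x = 0)
    have : Nat.card {z : G | c • z = -g} = ∏ i, Int.gcd c (ℓ i) := by
      rw [Nat.card_congr ((e1.trans e2).trans e3), Nat.card_pi]
      exact Finset.prod_congr rfl fun i _ => card_ker_zmod (ℓ i) c
    rw [← Nat.card_coe_set_eq]
    exact this
end

section
/- Let G be a finite abelian group with exponent ℓ*, I a non-periodic multiset with elements from G with multiplier group H, and K = ⟨t_1,...,t_m⟩ ≤ H with t_iI = I + g_i. If gcd(t_1−1, ..., t_m−1, ℓ*) = 1, then there exists z ∈ G such that t(I+z) = I+z for all t ∈ K. -/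
section aux
variable {G : Type*} [AddCommGroup G] [Fintype G] [DecidableEq G]

lemma trans_trans (m : G → ℕ) (a b : G) :
    translateM (translateM m a) b = translateM m (a + b) := by
  funext x; simp [translateM, sub_sub, add_comm]

lemma trans_inj (m : G → ℕ) (hnp : ∀ g : G, translateM m g = m → g = 0)
    {a b : G} (hab : translateM m a = translateM m b) : a = b := by
  have h1 : translateM m (a - b) = m := by
    funext x
    have h2 := congrFun hab (x + b)
    simp only [translateM, add_sub_cancel_right] at h2 ⊢
    rw [show x - (a - b) = x + b - a by abel, h2]
  have := hnp _ h1
  exact sub_eq_zero.mp this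

lemma dilate_mul (s u : ℕ) (m : G → ℕ) :
    dilateM (s * u) m = dilateM s (dilateM u m) := by
  funext x
  simp only [dilateM, Finset.sum_filter]
  have h1 : ∀ a : G, (if s • a = x then ∑ b : G, if u • b = a then m b else 0 else 0)
      = ∑ b : G, if u • b = a ∧ s • a = x then m b else 0 := by
    intro a
    split
    · exact Finset.sum_congr rfl fun b _ => by simp [*]
    · simp [*]
  rw [Finset.sum_congr rfl fun a _ => h1 a, Finset.sum_comm]
  refine Finset.sum_congr rfl fun b _ => ?_
  simp only [ite_and]
  rw [Finset.sum_ite_eq Finset.univ (u • b) (fun a => if s • a = x then m b else 0)]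
  simp [smul_smul]

lemma dilate_one (m : G → ℕ) : dilateM 1 m = m := by
  funext x
  simp only [dilateM, one_smul]
  rw [Finset.filter_eq' Finset.univ x]
  simp

lemma dilate_translate (u : ℕ) (m : G → ℕ) (g : G) :
    dilateM u (translateM m g) = translateM (dilateM u m) (u • g) := by
  funext x
  simp only [dilateM, translateM]
  refine Finset.sum_nbij' (fun j => j - g) (fun j => j + g) ?_ ?_ ?_ ?_ ?_
  · intro a ha
    simp only [Finset.mem_filter, Finset.mem_univ, true_and] at ha ⊢
    rw [smul_sub, ha]
  · intro a ha
    simp only [Finset.mem_filter, Finset.mem_univ, true_and] at ha ⊢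
    rw [smul_add, ha]; abel
  · intro a _; simp
  · intro a _; simp
  · intro a _; rfl

lemma nsmul_mod (a : ℕ) (j : G) : a • j = (a % AddMonoid.exponent G) • j := by
  conv_lhs => rw [← Nat.div_add_mod a (AddMonoid.exponent G)]
  rw [add_nsmul, mul_nsmul, AddMonoid.exponent_nsmul_eq_zero, smul_zero, zero_add]

lemma dilate_congr {a b : ℕ} (hab : (a : ZMod (AddMonoid.exponent G)) = b) (m : G → ℕ) :
    dilateM a m = dilateM b m := by
  have h : a % AddMonoid.exponent G = b % AddMonoid.exponent G :=
    (ZMod.natCast_eq_natCast_iff _ _ _).mp hab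
  funext x
  simp only [dilateM]
  congr 1
  ext j
  simp only [Finset.mem_filter]
  rw [nsmul_mod a, nsmul_mod b, h]

lemma gcd_rep {ι : Type*} [DecidableEq ι] (s : Finset ι) (f : ι → ℤ) :
    ∃ a : ι → ℤ, ∑ i ∈ s, a i * f i = s.gcd f := by
  induction s using Finset.induction with
  | empty => exact ⟨0, by simp⟩
  | insert i s hi ih =>
    obtain ⟨a, ha⟩ := ih
    refine ⟨fun j => if j = i then Int.gcdA (f i) (s.gcd f)
      else Int.gcdB (f i) (s.gcd f) * a j, ?_⟩
    rw [Finset.sum_insert hi, Finset.gcd_insert]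
    beta_reduce
    rw [if_pos rfl]
    have : ∑ j ∈ s, (if j = i then Int.gcdA (f i) (s.gcd f)
        else Int.gcdB (f i) (s.gcd f) * a j) * f j
        = Int.gcdB (f i) (s.gcd f) * ∑ j ∈ s, a j * f j := by
      rw [Finset.mul_sum]
      refine Finset.sum_congr rfl fun j hj => ?_
      rw [if_neg (fun hji : j = i => hi (hji ▸ hj)), mul_assoc]
    rw [this, ha]
    have hg : (gcd (f i) (s.gcd f) : ℤ) = (Int.gcd (f i) (s.gcd f) : ℤ) :=
      (Int.coe_gcd _ _).symm
    rw [hg, Int.gcd_eq_gcd_ab]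
    ring

end aux

/-- If `I` is non-periodic with multipliers `t₁,…,tₖ` (generating `K ≤ H`) with
`tᵢI = I + gᵢ`, and `gcd(t₁−1, …, tₖ−1, ℓ*) = 1`, then some translate `I + z` is fixed by
every element of `K`. -/
theorem stmt7 {G : Type*} [AddCommGroup G] [Fintype G] [DecidableEq G]
    (m : G → ℕ) (hnp : ∀ g : G, translateM m g = m → g = 0)
    (k : ℕ) (t : Fin k → ℕ) (ht : ∀ i, Nat.Coprime (t i) (AddMonoid.exponent G))
    (g : Fin k → G) (h : ∀ i, dilateM (t i) m = translateM m (g i))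
    (hC : Int.gcd (Finset.univ.gcd fun i => (t i : ℤ) - 1)
            (AddMonoid.exponent G : ℤ) = 1) :
    ∃ z : G, ∀ (s : ℕ) (hs : Nat.Coprime s (AddMonoid.exponent G)),
      ZMod.unitOfCoprime s hs ∈
          Subgroup.closure (Set.range fun i => ZMod.unitOfCoprime (t i) (ht i)) →
        dilateM s (translateM m z) = translateM m z := by
  set e := AddMonoid.exponent G with he
  haveI : NeZero e := ⟨AddMonoid.exponent_ne_zero_of_finite⟩
  -- cocycle symmetry
  have hsym : ∀ i j : Fin k, ((t j : ℤ) - 1) • g i = ((t i : ℤ) - 1) • g j := by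
    intro i j
    have key : g j + (t j) • g i = g i + (t i) • g j := by
      have h1 : dilateM (t j * t i) m = translateM m (g j + (t j) • g i) := by
        rw [dilate_mul, h i, dilate_translate, h j, trans_trans]
      have h2 : dilateM (t i * t j) m = translateM m (g i + (t i) • g j) := by
        rw [dilate_mul, h j, dilate_translate, h i, trans_trans]
      rw [mul_comm] at h1
      exact trans_inj m hnp (h1.symm.trans h2)
    rw [sub_smul, sub_smul, one_smul, one_smul, natCast_zsmul, natCast_zsmul,
      sub_eq_sub_iff_add_eq_add]
    rw [add_comm (g j), add_comm (g i)] at key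
    exact key
  -- Bezout coefficients
  obtain ⟨c, hc⟩ := gcd_rep (Finset.univ : Finset (Fin k)) (fun i => (t i : ℤ) - 1)
  have hcop : IsCoprime (Finset.univ.gcd fun i => (t i : ℤ) - 1) (e : ℤ) :=
    Int.isCoprime_iff_gcd_eq_one.mpr hC
  obtain ⟨u, v, huv⟩ := hcop
  set a : Fin k → ℤ := fun i => u * c i with ha
  have hsum : ∑ i : Fin k, a i * ((t i : ℤ) - 1) + v * e = 1 := by
    have : ∑ i : Fin k, a i * ((t i : ℤ) - 1)
        = u * (Finset.univ.gcd fun i => (t i : ℤ) - 1) := by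
      rw [← hc, Finset.mul_sum]
      exact Finset.sum_congr rfl fun i _ => by ring
    rw [this]; linarith [huv]
  set z : G := -(∑ i : Fin k, a i • g i) with hz
  -- main fix on generators
  have hfix : ∀ i : Fin k, g i + (t i) • z = z := by
    intro i
    have h1 : ((1 : ℤ) - (t i : ℤ)) • z = g i := by
      rw [hz, smul_neg, ← neg_smul, neg_sub, Finset.smul_sum]
      have h2 : ∀ j : Fin k, ((t i : ℤ) - 1) • a j • g j = (a j * ((t j : ℤ) - 1)) • g i := by
        intro j
        rw [smul_comm, ← hsym i j]
        simp only [ha, mul_smul]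
      rw [Finset.sum_congr rfl fun j _ => h2 j, ← Finset.sum_smul]
      have hs1 : (∑ j : Fin k, a j * ((t j : ℤ) - 1)) = 1 - v * e := by linarith [hsum]
      rw [hs1, sub_smul, one_smul, mul_smul, natCast_zsmul,
        AddMonoid.exponent_nsmul_eq_zero, smul_zero, sub_zero]
    have h3 : z - (t i) • z = g i := by
      rw [← h1, sub_smul, one_smul, natCast_zsmul]
    rw [← h3]; abel
  set m' : G → ℕ := translateM m z with hm'
  have hgen : ∀ i : Fin k, dilateM (t i) m' = m' := by
    intro i
    rw [hm', dilate_translate, h i, trans_trans, hfix i]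
  -- the subgroup of units fixing m'
  set S : Subgroup (ZMod e)ˣ :=
    { carrier := {w : (ZMod e)ˣ | dilateM (ZMod.val (w : ZMod e)) m' = m'}
      one_mem' := by
        have : (((1 : (ZMod e)ˣ) : ZMod e).val : ZMod e) = ((1 : ℕ) : ZMod e) := by
          rw [ZMod.natCast_val]; simp [ZMod.cast_id]
        show dilateM (ZMod.val ((1 : (ZMod e)ˣ) : ZMod e)) m' = m'
        rw [dilate_congr this, dilate_one]
      mul_mem' := by
        intro p q hp hq
        simp only [Set.mem_setOf_eq] at hp hq ⊢
        have hcast : (((p * q : (ZMod e)ˣ) : ZMod e).val : ZMod e)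
            = ((ZMod.val (p : ZMod e) * ZMod.val (q : ZMod e) : ℕ) : ZMod e) := by
          push_cast
          rw [ZMod.natCast_val, ZMod.natCast_val, ZMod.natCast_val]
          simp [ZMod.cast_id]
        rw [dilate_congr hcast, dilate_mul, hq, hp]
      inv_mem' := by
        intro p hp
        simp only [Set.mem_setOf_eq] at hp ⊢
        conv_lhs => rw [← hp, ← dilate_mul]
        have hcast : ((ZMod.val ((p⁻¹ : (ZMod e)ˣ) : ZMod e) * ZMod.val (p : ZMod e) : ℕ)
            : ZMod e) = ((1 : ℕ) : ZMod e) := by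
          push_cast
          rw [ZMod.natCast_val, ZMod.natCast_val]
          simp [ZMod.cast_id]
        rw [dilate_congr hcast, dilate_one] } with hS
  refine ⟨z, ?_⟩
  intro s hs hmem
  have hle : Subgroup.closure (Set.range fun i => ZMod.unitOfCoprime (t i) (ht i)) ≤ S := by
    rw [Subgroup.closure_le]
    rintro _ ⟨i, rfl⟩
    show dilateM (ZMod.val ((ZMod.unitOfCoprime (t i) (ht i) : (ZMod e)ˣ) : ZMod e)) m' = m'
    have hcast : ((ZMod.val ((ZMod.unitOfCoprime (t i) (ht i) : (ZMod e)ˣ) : ZMod e)) : ZMod e)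
        = ((t i : ℕ) : ZMod e) := by
      rw [ZMod.natCast_val, ZMod.coe_unitOfCoprime]
      simp [ZMod.cast_id]
    rw [dilate_congr hcast, hgen i]
  have hmem' := hle hmem
  have hfixs : dilateM (ZMod.val ((ZMod.unitOfCoprime s hs : (ZMod e)ˣ) : ZMod e)) m' = m' :=
    hmem'
  have hcast : ((s : ℕ) : ZMod e)
      = ((ZMod.val ((ZMod.unitOfCoprime s hs : (ZMod e)ˣ) : ZMod e)) : ZMod e) := by
    rw [ZMod.natCast_val, ZMod.coe_unitOfCoprime]
    simp [ZMod.cast_id]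
  rw [← hm']
  rw [dilate_congr hcast, hfixs]
end

section
/- Let G be a finite abelian group with exponent ℓ*, I a finite multiset with elements from G, and T_I the |G| × |G| adjacency matrix with T_I(i,j) equal to the multiplicity of g_j in I + g_i. If T_I is invertible, then every multiplier t of I is translate fixing, i.e., there exists z ∈ G with t(I+z) = I+z. -/
/-- Key reindexing: `∑_{j : t•j = x} m(j - i) = dilateM t m (x - t•i)`. -/
lemma key_sum {G : Type*} [AddCommGroup G] [Fintype G] [DecidableEq G] (m : G → ℕ)
    (t : ℕ) (i x : G) :
    ∑ j ∈ Finset.univ.filter (fun j : G => t • j = x), m (j - i)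
      = dilateM t m (x - t • i) := by
  unfold dilateM
  rw [Finset.sum_filter, Finset.sum_filter]
  refine Fintype.sum_equiv (Equiv.subRight i) _ _ (fun j => ?_)
  simp only [Equiv.subRight_apply]
  by_cases hj : t • j = x
  · rw [if_pos hj, if_pos (by rw [smul_sub, hj])]
  · rw [if_neg hj, if_neg (fun hc => hj (by
      rw [smul_sub, sub_left_inj] at hc; exact hc))]

/-- If the adjacency matrix `T_I(i,j) = m_{I+i}(j) = m(j − i)` of `I` is invertible
(over ℚ), then every multiplier of `I` is translate fixing. -/
theorem stmt13 {G : Type*} [AddCommGroup G] [Fintype G] [DecidableEq G] (m : G → ℕ)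
    (hdet : (Matrix.of fun i j : G => (m (j - i) : ℚ)).det ≠ 0)
    (t : ℕ) (ht : Nat.Coprime t (AddMonoid.exponent G)) (g : G)
    (h : dilateM t m = translateM m g) :
    ∃ z : G, dilateM t (translateM m z) = translateM m z := by
  have h' : ∀ x, dilateM t m x = m (x - g) := fun x => congrFun h x
  -- First find z with g + t • z = z via a trace argument.
  obtain ⟨z, hz⟩ : ∃ z : G, g + t • z = z := by
    by_contra hno
    push_neg at hno
    set T : Matrix G G ℚ := Matrix.of fun i j : G => (m (j - i) : ℚ) with hT
    set P : Matrix G G ℚ := Matrix.of fun i j : G => if t • i = j then 1 else 0 with hP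
    set Q : Matrix G G ℚ := Matrix.of fun i j : G => if g + t • i = j then 1 else 0 with hQ
    have hTP : T * P = Q * T := by
      ext i k
      have lhs : (T * P) i k = ∑ j ∈ Finset.univ.filter (fun j : G => t • j = k),
          (m (j - i) : ℚ) := by
        simp only [Matrix.mul_apply, hT, hP, Matrix.of_apply, mul_ite, mul_one, mul_zero]
        rw [Finset.sum_filter]
      have rhs : (Q * T) i k = (m (k - (g + t • i)) : ℚ) := by
        simp only [Matrix.mul_apply, hQ, hT, Matrix.of_apply, ite_mul, one_mul, zero_mul]
        rw [Finset.sum_ite_eq Finset.univ (g + t • i)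
            (fun j => (m (k - j) : ℚ)), if_pos (Finset.mem_univ _)]
      rw [lhs, rhs]
      rw [← Nat.cast_sum]
      norm_cast
      rw [key_sum m t i k, h' (k - t • i)]
      congr 1
      abel
    have hU : IsUnit T.det := isUnit_iff_ne_zero.mpr hdet
    have hQeq : Q = T * P * T⁻¹ := by
      rw [hTP, Matrix.mul_assoc, Matrix.mul_nonsing_inv _ hU, Matrix.mul_one]
    have htr : Q.trace = P.trace := by
      rw [hQeq, Matrix.trace_mul_cycle, Matrix.nonsing_inv_mul _ hU, Matrix.one_mul]
    have hQtr : Q.trace = 0 := by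
      unfold Matrix.trace
      apply Finset.sum_eq_zero
      intro i _
      simp only [Matrix.diag_apply, hQ, Matrix.of_apply]
      rw [if_neg (hno i)]
    have hPtr : (1 : ℚ) ≤ P.trace := by
      unfold Matrix.trace
      have h0 : (P.diag 0 : ℚ) = 1 := by simp [hP]
      calc (1 : ℚ) = P.diag 0 := h0.symm
        _ ≤ ∑ i, P.diag i := by
            apply Finset.single_le_sum (f := fun i => P.diag i) (fun i _ => ?_)
              (Finset.mem_univ 0)
            simp only [Matrix.diag_apply, hP, Matrix.of_apply]
            split <;> norm_num
    rw [← htr, hQtr] at hPtr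
    exact absurd hPtr (by norm_num)
  -- Now verify the translate `I + z` is fixed.
  refine ⟨z, funext fun x => ?_⟩
  show ∑ j ∈ Finset.univ.filter (fun j : G => t • j = x), m (j - z) = m (x - z)
  rw [key_sum m t z x, h' (x - t • z)]
  congr 1
  have hx : x - t • z - g = x - (g + t • z) := by abel
  rw [hx, hz]
end

section
/- Let G be a finite abelian group with exponent ℓ*, K ≤ (Z/ℓ*Z)^× a subgroup of the multiplier group of a finite multiset I with elements from G, gcd(|I|, ℓ*) = 1, and σ = Σ_{i∈I} i. Then the translated multiset I − |I|^{φ(ℓ*)−1}σ decomposes as a disjoint union of K-orbits of elements of G, each occurring with a constant multiplicity; that is, I − |I|^{φ(ℓ*)−1}σ = α_1 s_1K ∪ ⋯ ∪ α_r s_rK for some s_i ∈ G and α_i ∈ Z_{≥0}, where sK = {st : t ∈ K}. -/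
/-- The `K`-orbit of `s ∈ G`, for `K ≤ (ℤ/ℓ*ℤ)ˣ` acting on `G` by multiplication. -/
def orbSet {G : Type*} [AddCommGroup G] [Fintype G]
    (K : Subgroup (ZMod (AddMonoid.exponent G))ˣ) (s : G) : Set G :=
  {y | ∃ (t : ℕ) (ht : Nat.Coprime t (AddMonoid.exponent G)),
    ZMod.unitOfCoprime t ht ∈ K ∧ y = t • s}

section Aux

variable {G : Type*} [AddCommGroup G] [Fintype G] [DecidableEq G]

lemma aux_smul_modEq (a b : ℕ) (v : G) (h : a ≡ b [MOD AddMonoid.exponent G]) :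
    a • v = b • v := by
  rw [AddMonoid.nsmul_eq_mod_exponent, h, ← AddMonoid.nsmul_eq_mod_exponent]

lemma aux_exp_pos : 0 < AddMonoid.exponent G :=
  Nat.pos_of_ne_zero AddMonoid.exponent_ne_zero_of_finite

lemma aux_exists_inv (t : ℕ) (ht : Nat.Coprime t (AddMonoid.exponent G)) :
    ∃ t' : ℕ, Nat.Coprime t' (AddMonoid.exponent G) ∧
      t' * t ≡ 1 [MOD AddMonoid.exponent G] := by
  refine ⟨t ^ (Nat.totient (AddMonoid.exponent G) - 1), ht.pow_left _, ?_⟩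
  have hφ : 0 < Nat.totient (AddMonoid.exponent G) := Nat.totient_pos.mpr (aux_exp_pos (G := G))
  have : t ^ (Nat.totient (AddMonoid.exponent G) - 1) * t
      = t ^ Nat.totient (AddMonoid.exponent G) := by
    rw [← pow_succ, Nat.sub_add_cancel hφ]
  rw [this]
  exact Nat.ModEq.pow_totient ht

lemma aux_unit_mul (t t' : ℕ) (ht : Nat.Coprime t (AddMonoid.exponent G))
    (ht' : Nat.Coprime t' (AddMonoid.exponent G)) :
    ZMod.unitOfCoprime (t * t') (ht.mul ht' : Nat.Coprime (t * t') (AddMonoid.exponent G))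
      = ZMod.unitOfCoprime t ht * ZMod.unitOfCoprime t' ht' := by
  ext
  simp [ZMod.coe_unitOfCoprime]

lemma aux_inv_mem (K : Subgroup (ZMod (AddMonoid.exponent G))ˣ) (t t' : ℕ)
    (ht : Nat.Coprime t (AddMonoid.exponent G)) (ht' : Nat.Coprime t' (AddMonoid.exponent G))
    (h : t' * t ≡ 1 [MOD AddMonoid.exponent G])
    (hmem : ZMod.unitOfCoprime t ht ∈ K) : ZMod.unitOfCoprime t' ht' ∈ K := by
  have hone : ZMod.unitOfCoprime t' ht' * ZMod.unitOfCoprime t ht = 1 := by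
    ext
    push_cast [ZMod.coe_unitOfCoprime]
    rw [← Nat.cast_mul, show ((1 : ZMod (AddMonoid.exponent G)) = ((1 : ℕ) : ZMod _)) by simp]
    exact (ZMod.natCast_eq_natCast_iff _ _ _).mpr h
  rw [eq_inv_of_mul_eq_one_left hone]
  exact inv_mem hmem

lemma aux_smul_inj (t : ℕ) (ht : Nat.Coprime t (AddMonoid.exponent G)) :
    Function.Injective (fun a : G => t • a) := by
  obtain ⟨t', _, hmod⟩ := aux_exists_inv (G := G) t ht
  intro a b hab
  simp only at hab
  have : ∀ v : G, t' • t • v = v := fun v => by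
    rw [← mul_smul]
    rw [aux_smul_modEq _ 1 v hmod, one_smul]
  rw [← this a, ← this b, hab]

lemma aux_dilate_apply (t : ℕ) (ht : Nat.Coprime t (AddMonoid.exponent G)) (m : G → ℕ)
    (j : G) : dilateM t m (t • j) = m j := by
  unfold dilateM
  have : Finset.univ.filter (fun j' : G => t • j' = t • j) = {j} := by
    ext a
    simp [(aux_smul_inj t ht).eq_iff]
  rw [this, Finset.sum_singleton]

lemma aux_sum_dilate (t : ℕ) (m : G → ℕ) :
    ∑ x : G, dilateM t m x • x = t • ∑ i : G, m i • i := by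
  unfold dilateM
  calc ∑ x : G, (∑ j ∈ Finset.univ.filter (fun j : G => t • j = x), m j) • x
      = ∑ x : G, ∑ j ∈ Finset.univ.filter (fun j : G => t • j = x), m j • (t • j) := by
        refine Finset.sum_congr rfl fun x _ => ?_
        rw [Finset.sum_smul]
        exact Finset.sum_congr rfl fun j hj => by rw [(Finset.mem_filter.mp hj).2]
    _ = ∑ j : G, m j • (t • j) := Finset.sum_fiberwise _ _ _
    _ = t • ∑ i : G, m i • i := by
        rw [Finset.smul_sum]
        exact Finset.sum_congr rfl fun j _ => (smul_comm _ _ _)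

lemma aux_sum_translate (m : G → ℕ) (g : G) :
    ∑ x : G, translateM m g x • x = (∑ i : G, m i • i) + (∑ i : G, m i) • g := by
  unfold translateM
  have : ∑ x : G, m (x - g) • x = ∑ y : G, m y • (y + g) := by
    refine (Fintype.sum_equiv (Equiv.addRight g) _ _ fun y => ?_).symm
    simp
  rw [this]
  simp only [smul_add, Finset.sum_add_distrib]
  rw [← Finset.sum_smul]

end Aux

/-- If `K` is a subgroup of the multiplier group of `I` and `gcd(|I|, ℓ*) = 1`, then the
translated multiset `I − |I|^{φ(ℓ*)−1}σ` is a disjoint union of `K`-orbits, each with a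
constant multiplicity: `I − |I|^{φ(ℓ*)−1}σ = α₁s₁K ∪ ⋯ ∪ α_b s_bK`. -/
theorem stmt18 {G : Type*} [AddCommGroup G] [Fintype G] [DecidableEq G]
    (m : G → ℕ) (hco : Nat.Coprime (∑ i, m i) (AddMonoid.exponent G))
    (K : Subgroup (ZMod (AddMonoid.exponent G))ˣ)
    (hK : ∀ (s : ℕ) (hs : Nat.Coprime s (AddMonoid.exponent G)),
      ZMod.unitOfCoprime s hs ∈ K → ∃ g : G, dilateM s m = translateM m g) :
    ∃ (b : ℕ) (s : Fin b → G) (α : Fin b → ℕ),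
      (∀ i j : Fin b, i ≠ j → Disjoint (orbSet K (s i)) (orbSet K (s j))) ∧
      ∀ x : G,
        translateM m
            (-((∑ i, m i) ^ (Nat.totient (AddMonoid.exponent G) - 1) • (∑ i : G, m i • i))) x
          = ∑ i : Fin b, Set.indicator (orbSet K (s i)) (fun _ => α i) x := by
  classical
  set σ : G := ∑ i : G, m i • i with hσdef
  set c : ℕ := (∑ i, m i) ^ (Nat.totient (AddMonoid.exponent G) - 1) with hcdef
  set M : G → ℕ := fun x => m (x + c • σ) with hMdef
  -- M is the translated multiplicity function
  have hM : ∀ x : G, translateM m (-(c • σ)) x = M x := by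
    intro x
    simp [translateM, hMdef, sub_neg_eq_add]
  -- c * |I| ≡ 1 mod e
  have hc1 : c * (∑ i, m i) ≡ 1 [MOD AddMonoid.exponent G] := by
    have hφ : 0 < Nat.totient (AddMonoid.exponent G) := Nat.totient_pos.mpr (aux_exp_pos (G := G))
    have : c * (∑ i, m i) = (∑ i, m i) ^ Nat.totient (AddMonoid.exponent G) := by
      rw [hcdef, ← pow_succ, Nat.sub_add_cancel hφ]
    rw [this]
    exact Nat.ModEq.pow_totient hco
  -- Key: M is constant on K-orbits
  have key : ∀ (t : ℕ) (ht : Nat.Coprime t (AddMonoid.exponent G)), ZMod.unitOfCoprime t ht ∈ K →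
      ∀ x : G, M (t • x) = M x := by
    intro t ht hmem x
    obtain ⟨g, hg⟩ := hK t ht hmem
    -- determine g
    have hσ' : t • σ = σ + (∑ i, m i) • g := by
      rw [← aux_sum_dilate t m, hg, aux_sum_translate]
    have hgval : g = c • (t • σ) - c • σ := by
      have h2 : c • (t • σ) = c • σ + (c * (∑ i, m i)) • g := by
        rw [hσ', smul_add, mul_smul]
      rw [aux_smul_modEq _ 1 g hc1, one_smul] at h2
      rw [h2]
      abel
    -- pointwise relation
    have hpt : m (x + c • σ) = m (t • (x + c • σ) - g) := by
      have := congrFun hg (t • (x + c • σ))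
      rw [aux_dilate_apply t ht] at this
      exact this
    have hcomm : t • c • σ = c • t • σ := by
      rw [← mul_smul, ← mul_smul, mul_comm]
    have harg : t • (x + c • σ) - g = t • x + c • σ := by
      rw [smul_add, hgval, hcomm]
      abel
    show m (t • x + c • σ) = m (x + c • σ)
    rw [← harg, ← hpt]
  -- orbSet is an equivalence relation
  have refl : ∀ x : G, x ∈ orbSet K x := by
    intro x
    refine ⟨1, Nat.coprime_one_left _, ?_, (one_smul ℕ x).symm⟩
    have : ZMod.unitOfCoprime 1 (Nat.coprime_one_left (AddMonoid.exponent G)) = 1 := by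
      ext; simp [ZMod.coe_unitOfCoprime]
    rw [this]
    exact one_mem K
  have symm : ∀ x y : G, y ∈ orbSet K x → x ∈ orbSet K y := by
    rintro x y ⟨t, ht, hmem, rfl⟩
    obtain ⟨t', ht', hmod⟩ := aux_exists_inv (G := G) t ht
    refine ⟨t', ht', aux_inv_mem K t t' ht ht' hmod hmem, ?_⟩
    rw [← mul_smul, aux_smul_modEq _ 1 x hmod, one_smul]
  have trans : ∀ x y z : G, y ∈ orbSet K x → z ∈ orbSet K y → z ∈ orbSet K x := by
    rintro x y z ⟨t₁, ht₁, hmem₁, rfl⟩ ⟨t₂, ht₂, hmem₂, rfl⟩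
    refine ⟨t₂ * t₁, ht₂.mul ht₁, ?_, (mul_smul t₂ t₁ x).symm⟩
    rw [aux_unit_mul t₂ t₁ ht₂ ht₁]
    exact mul_mem hmem₂ hmem₁
  -- the setoid of orbits
  let sd : Setoid G := ⟨fun x y => y ∈ orbSet K x,
    ⟨refl, fun {a b} h => symm a b h, fun {a b c'} h1 h2 => trans a b c' h1 h2⟩⟩
  haveI : Fintype (Quotient sd) := Fintype.ofFinite _
  set b := Fintype.card (Quotient sd) with hb
  let E : Quotient sd ≃ Fin b := Fintype.equivFin _
  refine ⟨b, fun i => (E.symm i).out, fun i => M (E.symm i).out, ?_, ?_⟩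
  · intro i j hij
    rw [Set.disjoint_left]
    intro a hai haj
    apply hij
    have : Quotient.mk sd (E.symm i).out = Quotient.mk sd (E.symm j).out :=
      Quotient.sound (trans _ a _ hai (symm _ _ haj))
    rw [Quotient.out_eq, Quotient.out_eq] at this
    exact E.symm.injective this
  · intro x
    rw [hM]
    set i0 : Fin b := E (Quotient.mk sd x) with hi0
    have hsi0 : (E.symm i0).out = (Quotient.mk sd x).out := by rw [hi0, E.symm_apply_apply]
    have hx : x ∈ orbSet K (E.symm i0).out := by
      rw [hsi0]
      exact Quotient.mk_out x
    rw [Finset.sum_eq_single i0]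
    · rw [Set.indicator_of_mem hx]
      obtain ⟨t, ht, hmem, hxe⟩ := hx
      rw [hxe]
      exact key t ht hmem _
    · intro j _ hj
      rw [Set.indicator_of_notMem]
      intro hxj
      apply hj
      have : Quotient.mk sd (E.symm j).out = Quotient.mk sd x := Quotient.sound hxj
      rw [Quotient.out_eq] at this
      rw [hi0, ← this, E.apply_symm_apply]
    · intro h
      exact absurd (Finset.mem_univ i0) h
end
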